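/- arXiv:2202.00356 — 2 statements merged into one kernel-verified Lean document; each statement's English description precedes it below -/
import Mathlib

section
/- Main combinatorial lemma for constructing free sets: Let X be a space, A ⊆ X, κ an infinite cardinal, and W a family of open subsets of X such that (a) W is closed under unions of subfamilies of size < κ, (b) A \ W ≠ ∅ for every W ∈ W, and (c) for every S ⊆ A with S free in X and |S| < κ there is W ∈ W with closure(S) ⊆ W. Then there is a subset of A of cardinality κ that is free in X. -/
open Set Cardinal

universe u

/-- A set `S` is free in `X` if it admits a well-ordering such that for every `b ∈ S`
the closure of the set of predecessors of `b` is disjoint from the closure of the set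
of the remaining elements. -/
def IsFreeSet {X : Type u} [TopologicalSpace X] (S : Set X) : Prop :=
  ∃ r : S → S → Prop, IsWellOrder S r ∧
    ∀ b : S, closure (Subtype.val '' {a | r a b}) ∩ closure (Subtype.val '' {a | ¬ r a b}) = ∅

/-- Auxiliary lemma: if points `g i` are separated by an increasing family of open sets
`W i` (the closure of each initial segment is inside `W i`, while all later points are
outside `W i`), then `g` is injective and its range is a free set. -/
lemma isFreeSet_aux {X : Type u} [TopologicalSpace X] {ι : Type*} [LinearOrder ι]
    [WellFoundedLT ι] (g : ι → X) (W : ι → Set X) (hop : ∀ i, IsOpen (W i))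
    (hcl : ∀ i, closure (g '' Set.Iio i) ⊆ W i)
    (hout : ∀ i j, i ≤ j → g j ∉ W i) :
    Function.Injective g ∧ IsFreeSet (Set.range g) := by
  have inj : Function.Injective g := by
    intro i j hij
    by_contra hne
    rcases Ne.lt_or_gt hne with h | h
    · exact hout j j le_rfl (hij ▸ hcl j (subset_closure ⟨i, h, rfl⟩))
    · exact hout i i le_rfl (hij ▸ hcl i (subset_closure ⟨j, h, rfl⟩))
  refine ⟨inj, ?_⟩
  let e : ι ≃ Set.range g := Equiv.ofInjective g inj
  have hval : ∀ a : Set.range g, (a : X) = g (e.symm a) := fun a =>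
    (Equiv.apply_ofInjective_symm inj a).symm
  refine ⟨fun a b => e.symm a < e.symm b,
    (RelEmbedding.mk e.symm.toEmbedding (fun {a b} => Iff.rfl)).isWellOrder, fun b => ?_⟩
  set i := e.symm b with hi
  have h1 : Subtype.val '' {a : Set.range g | e.symm a < i} = g '' Set.Iio i := by
    ext x
    constructor
    · rintro ⟨a, ha, rfl⟩
      exact ⟨e.symm a, ha, (hval a).symm⟩
    · rintro ⟨j, hj, rfl⟩
      refine ⟨e j, by simpa using hj, ?_⟩
      rw [hval (e j)]
      simp
  have h2 : Subtype.val '' {a : Set.range g | ¬ e.symm a < i} ⊆ (W i)ᶜ := by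
    rintro x ⟨a, ha, rfl⟩
    rw [hval a]
    exact hout i _ (not_lt.mp ha)
  have c1 : closure (Subtype.val '' {a : Set.range g | e.symm a < i}) ⊆ W i := by
    rw [h1]; exact hcl i
  have c2 : closure (Subtype.val '' {a : Set.range g | ¬ e.symm a < i}) ⊆ (W i)ᶜ :=
    closure_minimal h2 (hop i).isClosed_compl
  rw [← Set.subset_empty_iff]
  intro x hx
  exact c2 hx.2 (c1 hx.1)

/-- main combinatorial lemma for constructing free sets. -/
theorem exists_freeSet_of_family {X : Type u} [TopologicalSpace X] (A : Set X)
    (κ : Cardinal.{u}) (hκ : ℵ₀ ≤ κ) (𝒲 : Set (Set X))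
    (hopen : ∀ w ∈ 𝒲, IsOpen w)
    (ha : ∀ 𝒲₀ ⊆ 𝒲, #𝒲₀ < κ → ⋃₀ 𝒲₀ ∈ 𝒲)
    (hb : ∀ w ∈ 𝒲, (A \ w).Nonempty)
    (hc : ∀ S ⊆ A, IsFreeSet S → #S < κ → ∃ w ∈ 𝒲, closure S ⊆ w) :
    ∃ B ⊆ A, #B = κ ∧ IsFreeSet B := by
  classical
  have hX : (A \ ⋃₀ (∅ : Set (Set X))).Nonempty :=
    hb _ (ha ∅ (empty_subset _) (by simpa using aleph0_pos.trans_le hκ))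
  haveI : Nonempty X := ⟨hX.choose⟩
  -- build the transfinite sequence of points and open sets by well-founded recursion
  obtain ⟨F, hF⟩ : ∃ F : κ.ord.ToType → X × Set X, ∀ i, F i =
      Classical.epsilon (fun p : X × Set X => p.2 ∈ 𝒲 ∧ p.1 ∈ A \ p.2 ∧
        (∀ k, k < i → (F k).2 ⊆ p.2) ∧
        closure {x | ∃ k, ∃ _ : k < i, (F k).1 = x} ⊆ p.2) :=
    ⟨wellFounded_lt.fix (fun j IH => Classical.epsilon (fun p : X × Set X =>
        p.2 ∈ 𝒲 ∧ p.1 ∈ A \ p.2 ∧ (∀ k (h : k < j), (IH k h).2 ⊆ p.2) ∧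
        closure {x | ∃ k, ∃ h : k < j, (IH k h).1 = x} ⊆ p.2)),
      fun i => WellFounded.fix_eq _ _ i⟩
  have hseg : ∀ i : κ.ord.ToType,
      {x | ∃ k, ∃ _ : k < i, (F k).1 = x} = (fun k => (F k).1) '' Set.Iio i := by
    intro i
    ext x
    simp only [Set.mem_image, Set.mem_Iio, Set.mem_setOf_eq, exists_prop]
  have key : ∀ i : κ.ord.ToType, (F i).2 ∈ 𝒲 ∧ (F i).1 ∈ A \ (F i).2 ∧
      (∀ k, k < i → (F k).2 ⊆ (F i).2) ∧
      closure {x | ∃ k, ∃ _ : k < i, (F k).1 = x} ⊆ (F i).2 := by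
    intro i
    refine wellFounded_lt.induction (C := fun i => (F i).2 ∈ 𝒲 ∧ (F i).1 ∈ A \ (F i).2 ∧
      (∀ k, k < i → (F k).2 ⊆ (F i).2) ∧
      closure {x | ∃ k, ∃ _ : k < i, (F k).1 = x} ⊆ (F i).2) i fun i IH => ?_
    have hex : ∃ p : X × Set X, p.2 ∈ 𝒲 ∧ p.1 ∈ A \ p.2 ∧
        (∀ k, k < i → (F k).2 ⊆ p.2) ∧
        closure {x | ∃ k, ∃ _ : k < i, (F k).1 = x} ⊆ p.2 := by
      set S : Set X := (fun k => (F k).1) '' Set.Iio i with hS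
      have hSA : S ⊆ A := by
        rintro x ⟨k, hk, rfl⟩
        exact ((IH k hk).2.1).1
      have hScard : #S < κ := mk_image_le.trans_lt (mk_Iio_ord_toType i)
      have hSfree : IsFreeSet S := by
        have hr : Set.range (fun k : {k // k < i} => (F k.1).1) = S := by
          rw [hS, Set.image_eq_range]
          rfl
        rw [← hr]
        refine (isFreeSet_aux (fun k : {k // k < i} => (F k.1).1) (fun k => (F k.1).2)
          (fun k => hopen _ (IH k.1 k.2).1) (fun k => ?_) (fun k l hkl => ?_)).2
        · have himg : (fun k : {k // k < i} => (F k.1).1) '' Set.Iio k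
              = (fun k => (F k).1) '' Set.Iio k.1 := by
            ext x
            constructor
            · rintro ⟨l, hl, rfl⟩
              exact ⟨l.1, hl, rfl⟩
            · rintro ⟨l, hl, rfl⟩
              exact ⟨⟨l, hl.trans k.2⟩, hl, rfl⟩
          rw [himg, ← hseg k.1]
          exact (IH k.1 k.2).2.2.2
        · rcases hkl.eq_or_lt with h | h
          · rw [h]
            exact ((IH l.1 l.2).2.1).2
          · exact fun hmem => ((IH l.1 l.2).2.1).2 ((IH l.1 l.2).2.2.1 k.1 h hmem)
      obtain ⟨w₀, hw₀, hw₀cl⟩ := hc S hSA hSfree hScard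
      set 𝒲₀ : Set (Set X) := insert w₀ ((fun k => (F k).2) '' Set.Iio i) with h𝒲₀
      have hsub : 𝒲₀ ⊆ 𝒲 := by
        intro w hw
        rcases hw with rfl | ⟨k, hk, rfl⟩
        · exact hw₀
        · exact (IH k hk).1
      have hcard : #𝒲₀ < κ := by
        refine mk_insert_le.trans_lt ?_
        exact Cardinal.add_lt_of_lt hκ (mk_image_le.trans_lt (mk_Iio_ord_toType i))
          (one_lt_aleph0.trans_le hκ)
      have hWmem : ⋃₀ 𝒲₀ ∈ 𝒲 := ha _ hsub hcard
      obtain ⟨x, hx⟩ := hb _ hWmem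
      refine ⟨(x, ⋃₀ 𝒲₀), hWmem, hx, fun k hk =>
        subset_sUnion_of_mem (mem_insert_of_mem _ ⟨k, hk, rfl⟩), ?_⟩
      rw [hseg i, ← hS]
      exact hw₀cl.trans (subset_sUnion_of_mem (mem_insert _ _))
    show (F i).2 ∈ 𝒲 ∧ (F i).1 ∈ A \ (F i).2 ∧ (∀ k, k < i → (F k).2 ⊆ (F i).2) ∧
      closure {x | ∃ k, ∃ _ : k < i, (F k).1 = x} ⊆ (F i).2
    rw [hF i]
    exact Classical.epsilon_spec hex
  obtain ⟨inj, free⟩ := isFreeSet_aux (fun i => (F i).1) (fun i => (F i).2)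
    (fun i => hopen _ (key i).1)
    (fun i => by rw [← hseg i]; exact (key i).2.2.2)
    (fun i j hij => by
      rcases hij.eq_or_lt with h | h
      · rw [h]; exact ((key j).2.1).2
      · exact fun hmem => ((key j).2.1).2 ((key j).2.2.1 i h hmem))
  refine ⟨Set.range (fun i => (F i).1), ?_, ?_, free⟩
  · rintro x ⟨i, rfl⟩
    exact ((key i).2.1).1
  · rw [mk_range_eq _ inj, mk_toType, card_ord]
end

section
/- Let X be a space, z ∈ X, κ an infinite cardinal, and assume that for every open U containing z there is a closed G_κ-set H with z ∈ H ⊆ U. Suppose Y ⊆ X \ {z} satisfies: (i) H ∩ Y ≠ ∅ for every G_κ-set H containing z, and (ii) z ∉ closure(S) for every free set S ⊆ Y with |S| ≤ κ. Then Y contains a subset of cardinality κ⁺ that is free in X. -/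
open Set Cardinal

universe u

/-- `H` is a `G_κ`-set: an intersection of at most `κ` open sets. -/
def IsGKappaSet {X : Type u} [TopologicalSpace X] (κ : Cardinal.{u}) (H : Set X) : Prop :=
  ∃ 𝒢 : Set (Set X), #𝒢 ≤ κ ∧ (∀ g ∈ 𝒢, IsOpen g) ∧ H = ⋂₀ 𝒢

section Aux

variable {X : Type u} [TopologicalSpace X]

lemma isGKappaSet_univ (κ : Cardinal.{u}) : IsGKappaSet κ (Set.univ : Set X) :=
  ⟨∅, by simp, by simp, by simp⟩

lemma isGKappaSet_sInter {κ : Cardinal.{u}} (hκ : ℵ₀ ≤ κ) {𝒮 : Set (Set X)}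
    (h𝒮 : #𝒮 ≤ κ) (h : ∀ s ∈ 𝒮, IsGKappaSet κ s) : IsGKappaSet κ (⋂₀ 𝒮) := by
  choose 𝒢 h1 h2 h3 using h
  refine ⟨⋃ s : 𝒮, 𝒢 s s.2, ?_, ?_, ?_⟩
  · refine le_trans (mk_iUnion_le _) ?_
    calc #𝒮 * ⨆ s : 𝒮, #(𝒢 s s.2) ≤ κ * κ :=
          mul_le_mul' h𝒮 (ciSup_le' fun s => h1 s s.2)
      _ = κ := mul_eq_self hκ
  · intro g hg
    simp only [mem_iUnion] at hg
    obtain ⟨s, hgs⟩ := hg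
    exact h2 s s.2 g hgs
  · ext p
    simp only [mem_sInter, mem_iUnion]
    constructor
    · intro hp g hg
      obtain ⟨s, hgs⟩ := hg
      have := hp s s.2
      rw [h3 s s.2] at this
      exact this g hgs
    · intro hp s hs
      rw [h3 s hs]
      intro g hg
      exact hp g ⟨⟨s, hs⟩, hg⟩

lemma isGKappaSet_inter {κ : Cardinal.{u}} (hκ : ℵ₀ ≤ κ) {A B : Set X}
    (hA : IsGKappaSet κ A) (hB : IsGKappaSet κ B) : IsGKappaSet κ (A ∩ B) := by
  have hcard : #({A, B} : Set (Set X)) ≤ κ := by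
    refine le_trans (mk_insert_le) ?_
    rw [mk_singleton]
    refine le_trans ?_ hκ
    exact_mod_cast (Cardinal.nat_lt_aleph0 2).le
  have := isGKappaSet_sInter hκ hcard (by
    rintro s hs
    rcases hs with rfl | rfl
    · exact hA
    · exact hB)
  rwa [sInter_pair] at this

end Aux

section Construction

variable {X : Type u} [TopologicalSpace X]

instance (o : Ordinal.{u}) : IsWellOrder o.ToType (· < ·) := isWellOrder_lt

open scoped Classical in
/-- Pick a point of `F ∩ Y` if possible. -/
noncomputable def pickPt (z : X) (Y F : Set X) : X :=
  if h : (F ∩ Y).Nonempty then h.choose else z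

open scoped Classical in
lemma pickPt_mem {z : X} {Y F : Set X} (h : (F ∩ Y).Nonempty) :
    pickPt z Y F ∈ F ∩ Y := by
  rw [pickPt, dif_pos h]; exact h.choose_spec

open scoped Classical in
/-- The transfinite sequence of closed `G_κ` sets. -/
noncomputable def Ffam (z : X) (κ : Cardinal.{u}) (Y : Set X) : Ordinal.{u} → Set X :=
  WellFounded.fix Ordinal.lt_wf fun α IH =>
    (if h : ∃ H : Set X, IsClosed H ∧ IsGKappaSet κ H ∧ z ∈ H ∧
        H ⊆ (closure {p : X | ∃ β : Ordinal.{u}, ∃ hb : β < α, pickPt z Y (IH β hb) = p})ᶜ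
      then h.choose else Set.univ) ∩ ⋂ (β : Ordinal.{u}), ⋂ (hb : β < α), IH β hb

/-- The transfinite sequence of points. -/
noncomputable def xpt (z : X) (κ : Cardinal.{u}) (Y : Set X) (α : Ordinal.{u}) : X :=
  pickPt z Y (Ffam z κ Y α)

/-- The initial segments. -/
def Sset (z : X) (κ : Cardinal.{u}) (Y : Set X) (α : Ordinal.{u}) : Set X :=
  {p : X | ∃ β : Ordinal.{u}, ∃ _ : β < α, xpt z κ Y β = p}

open scoped Classical in
lemma Ffam_eq (z : X) (κ : Cardinal.{u}) (Y : Set X) (α : Ordinal.{u}) :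
    Ffam z κ Y α =
    (if h : ∃ H : Set X, IsClosed H ∧ IsGKappaSet κ H ∧ z ∈ H ∧
        H ⊆ (closure (Sset z κ Y α))ᶜ
      then h.choose else Set.univ) ∩ ⋂ (β : Ordinal.{u}), ⋂ (_ : β < α), Ffam z κ Y β :=
  WellFounded.fix_eq _ _ _

/-- The invariant maintained along the recursion. -/
def Pprop (z : X) (κ : Cardinal.{u}) (Y : Set X) (α : Ordinal.{u}) : Prop :=
  z ∈ Ffam z κ Y α ∧ IsClosed (Ffam z κ Y α) ∧ IsGKappaSet κ (Ffam z κ Y α) ∧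
    Ffam z κ Y α ∩ closure (Sset z κ Y α) = ∅ ∧
    ∀ β < α, Ffam z κ Y α ⊆ Ffam z κ Y β

variable {z : X} {κ : Cardinal.{u}} {Y : Set X}

lemma xpt_mem (hi : ∀ H : Set X, IsGKappaSet κ H → z ∈ H → (H ∩ Y).Nonempty)
    {α : Ordinal.{u}} (hα : Pprop z κ Y α) : xpt z κ Y α ∈ Ffam z κ Y α ∩ Y :=
  pickPt_mem (hi _ hα.2.2.1 hα.1)

lemma Ffam_chain {α : Ordinal.{u}} (hP : ∀ β < α, Pprop z κ Y β) {β γ : Ordinal.{u}}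
    (hle : β ≤ γ) (hlt : γ < α) : Ffam z κ Y γ ⊆ Ffam z κ Y β := by
  rcases eq_or_lt_of_le hle with rfl | h
  · exact subset_rfl
  · exact (hP γ hlt).2.2.2.2 β h

lemma xpt_in_earlier (hi : ∀ H : Set X, IsGKappaSet κ H → z ∈ H → (H ∩ Y).Nonempty)
    {α : Ordinal.{u}} (hP : ∀ β < α, Pprop z κ Y β) {β γ : Ordinal.{u}}
    (hle : β ≤ γ) (hlt : γ < α) : xpt z κ Y γ ∈ Ffam z κ Y β :=
  Ffam_chain hP hle hlt (xpt_mem hi (hP γ hlt)).1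

lemma sset_subset (hi : ∀ H : Set X, IsGKappaSet κ H → z ∈ H → (H ∩ Y).Nonempty)
    {α : Ordinal.{u}} (hP : ∀ β < α, Pprop z κ Y β) : Sset z κ Y α ⊆ Y := by
  rintro p ⟨β, hb, rfl⟩
  exact (xpt_mem hi (hP β hb)).2

lemma xpt_ne (hi : ∀ H : Set X, IsGKappaSet κ H → z ∈ H → (H ∩ Y).Nonempty)
    {α : Ordinal.{u}} (hP : ∀ β < α, Pprop z κ Y β) {β γ : Ordinal.{u}}
    (hβγ : β < γ) (hγα : γ < α) : xpt z κ Y β ≠ xpt z κ Y γ := by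
  intro heq
  have h1 : xpt z κ Y β ∈ closure (Sset z κ Y γ) := subset_closure ⟨β, hβγ, rfl⟩
  have h2 : xpt z κ Y γ ∈ Ffam z κ Y γ := (xpt_mem hi (hP γ hγα)).1
  have h3 := (hP γ hγα).2.2.2.1
  have : xpt z κ Y γ ∈ Ffam z κ Y γ ∩ closure (Sset z κ Y γ) := ⟨h2, heq ▸ h1⟩
  rw [h3] at this
  exact this

lemma sset_free (hi : ∀ H : Set X, IsGKappaSet κ H → z ∈ H → (H ∩ Y).Nonempty)
    {α : Ordinal.{u}} (hP : ∀ β < α, Pprop z κ Y β) : IsFreeSet (Sset z κ Y α) := by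
  have hmem : ∀ a : Sset z κ Y α, ∃ β : Ordinal.{u}, β < α ∧ xpt z κ Y β = (a : X) := by
    rintro ⟨a, β, hb, rfl⟩
    exact ⟨β, hb, rfl⟩
  choose idx idxlt idxeq using hmem
  have hidxinj : Function.Injective idx := by
    intro a b hab
    apply Subtype.ext
    rw [← idxeq a, ← idxeq b, hab]
  refine ⟨fun a b => idx a < idx b, ?_, ?_⟩
  · exact (RelEmbedding.mk ⟨idx, hidxinj⟩ Iff.rfl).isWellOrder
  · intro b
    have h1 : Subtype.val '' {a | idx a < idx b} ⊆ Sset z κ Y (idx b) := by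
      rintro p ⟨a, ha, rfl⟩
      exact ⟨idx a, ha, idxeq a⟩
    have h2 : Subtype.val '' {a | ¬ idx a < idx b} ⊆ Ffam z κ Y (idx b) := by
      rintro p ⟨a, ha, rfl⟩
      rw [← idxeq a]
      exact xpt_in_earlier hi hP (not_lt.mp ha) (idxlt a)
    have hc2 : closure (Subtype.val '' {a | ¬ idx a < idx b}) ⊆ Ffam z κ Y (idx b) :=
      closure_minimal h2 (hP _ (idxlt b)).2.1
    apply subset_empty_iff.mp
    refine le_trans (inter_subset_inter (closure_mono h1) hc2) ?_
    rw [inter_comm, (hP _ (idxlt b)).2.2.2.1]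

lemma sset_eq_range (z : X) (κ : Cardinal.{u}) (Y : Set X) (α : Ordinal.{u}) :
    Sset z κ Y α =
      Set.range (fun i : α.ToType => xpt z κ Y (Ordinal.typein (α := α.ToType) (· < ·) i)) := by
  ext p
  constructor
  · rintro ⟨β, hb, rfl⟩
    obtain ⟨i, hi⟩ := Ordinal.typein_surj (α := α.ToType) (· < ·)
      (o := β) (by rwa [Ordinal.type_toType])
    exact ⟨i, congrArg (xpt z κ Y) hi⟩
  · rintro ⟨i, rfl⟩
    refine ⟨Ordinal.typein (α := α.ToType) (· < ·) i, ?_, rfl⟩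
    have := Ordinal.typein_lt_type (α := α.ToType) (· < ·) i
    rwa [Ordinal.type_toType] at this

lemma sset_card (z : X) (κ : Cardinal.{u}) (Y : Set X) (α : Ordinal.{u}) :
    #(Sset z κ Y α) ≤ α.card := by
  rw [sset_eq_range]
  exact le_trans mk_range_le (le_of_eq (Cardinal.mk_toType α))

end Construction

/-- if `z` has a neighborhood base of closed `G_κ`-sets, every `G_κ`-set
containing `z` meets `Y ⊆ X \ {z}`, and `z` is not in the closure of any free subset of `Y`
of size `≤ κ`, then `Y` contains a free set of size `κ⁺`. -/
theorem exists_freeSet_of_GKappa {X : Type u} [TopologicalSpace X] (z : X)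
    (κ : Cardinal.{u}) (hκ : ℵ₀ ≤ κ)
    (hbase : ∀ U : Set X, IsOpen U → z ∈ U →
      ∃ H : Set X, IsClosed H ∧ IsGKappaSet κ H ∧ z ∈ H ∧ H ⊆ U)
    (Y : Set X) (hY : Y ⊆ {z}ᶜ)
    (hi : ∀ H : Set X, IsGKappaSet κ H → z ∈ H → (H ∩ Y).Nonempty)
    (hii : ∀ S ⊆ Y, IsFreeSet S → #S ≤ κ → z ∉ closure S) :
    ∃ B ⊆ Y, #B = Order.succ κ ∧ IsFreeSet B := by
  classical
  set o : Ordinal.{u} := (Order.succ κ).ord with ho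
  -- main induction: the invariant holds below o
  have main : ∀ α, α < o → Pprop z κ Y α := by
    intro α
    induction α using Ordinal.induction with
    | h α IH =>
      intro hαo
      have hP : ∀ β < α, Pprop z κ Y β := fun β hb => IH β hb (hb.trans hαo)
      have hcard : #(Sset z κ Y α) ≤ κ := by
        refine (sset_card z κ Y α).trans ?_
        exact Order.lt_succ_iff.mp (Cardinal.lt_ord.mp hαo)
      have hz : z ∉ closure (Sset z κ Y α) :=
        hii _ (sset_subset hi hP) (sset_free hi hP) hcard
      have he : ∃ H : Set X, IsClosed H ∧ IsGKappaSet κ H ∧ z ∈ H ∧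
          H ⊆ (closure (Sset z κ Y α))ᶜ :=
        hbase _ isClosed_closure.isOpen_compl hz
      have hG : Ffam z κ Y α =
          he.choose ∩ ⋂ (β : Ordinal.{u}), ⋂ (_ : β < α), Ffam z κ Y β := by
        rw [Ffam_eq, dif_pos he]
      obtain ⟨hHc, hHg, hHz, hHsub⟩ := he.choose_spec
      -- properties of the big intersection
      have hGsInter : (⋂ (β : Ordinal.{u}), ⋂ (_ : β < α), Ffam z κ Y β) =
          ⋂₀ (Ffam z κ Y '' Iio α) := by
        ext p
        simp only [mem_iInter, mem_sInter, mem_image, mem_Iio]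
        constructor
        · rintro hp g ⟨β, hβ, rfl⟩
          exact hp β hβ
        · intro hp β hβ
          exact hp _ ⟨β, hβ, rfl⟩
      have hGz : z ∈ ⋂ (β : Ordinal.{u}), ⋂ (_ : β < α), Ffam z κ Y β := by
        simp only [mem_iInter]
        exact fun β hβ => (hP β hβ).1
      have hGclosed : IsClosed (⋂ (β : Ordinal.{u}), ⋂ (_ : β < α), Ffam z κ Y β) :=
        isClosed_iInter fun β => isClosed_iInter fun hβ => (hP β hβ).2.1
      have hGcard : #(Ffam z κ Y '' Iio α) ≤ κ := by
        have h1 : Cardinal.lift.{u+1} #(Ffam z κ Y '' Iio α) ≤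
            Cardinal.lift.{u} #(Iio α) := mk_image_le_lift
        rw [Ordinal.mk_Iio_ordinal] at h1
        have h2 : Cardinal.lift.{u+1} #(Ffam z κ Y '' Iio α) ≤ Cardinal.lift.{u+1} κ := by
          refine h1.trans ?_
          simp only [Cardinal.lift_lift]
          exact Cardinal.lift_le.mpr (Order.lt_succ_iff.mp (Cardinal.lt_ord.mp hαo))
        exact Cardinal.lift_le.mp h2
      have hGgk : IsGKappaSet κ (⋂ (β : Ordinal.{u}), ⋂ (_ : β < α), Ffam z κ Y β) := by
        rw [hGsInter]
        refine isGKappaSet_sInter hκ hGcard ?_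
        rintro s ⟨β, hβ, rfl⟩
        exact (hP β hβ).2.2.1
      refine ⟨?_, ?_, ?_, ?_, ?_⟩
      · rw [hG]; exact ⟨hHz, hGz⟩
      · rw [hG]; exact hHc.inter hGclosed
      · rw [hG]; exact isGKappaSet_inter hκ hHg hGgk
      · rw [hG]
        apply subset_empty_iff.mp
        rintro p ⟨⟨hp1, _⟩, hp2⟩
        exact hHsub hp1 hp2
      · intro β hβ
        rw [hG]
        intro p hp
        have := hp.2
        simp only [mem_iInter] at this
        exact this β hβ
  -- assemble the free set
  have hPo : ∀ β < o, Pprop z κ Y β := main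
  refine ⟨Sset z κ Y o, sset_subset hi hPo, ?_, sset_free hi hPo⟩
  -- cardinality
  rw [sset_eq_range]
  have hinj : Function.Injective
      (fun i : o.ToType => xpt z κ Y (Ordinal.typein (α := o.ToType) (· < ·) i)) := by
    intro i j hij
    by_contra hne
    have hne' : Ordinal.typein (α := o.ToType) (· < ·) i ≠
        Ordinal.typein (α := o.ToType) (· < ·) j :=
      fun h => hne (Ordinal.typein_injective _ h)
    have hlt : ∀ k : o.ToType, Ordinal.typein (α := o.ToType) (· < ·) k < o := by
      intro k
      have := Ordinal.typein_lt_type (α := o.ToType) (· < ·) k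
      rwa [Ordinal.type_toType] at this
    rcases lt_or_gt_of_ne hne' with h | h
    · exact xpt_ne hi hPo h (hlt j) hij
    · exact xpt_ne hi hPo h (hlt i) hij.symm
  rw [mk_range_eq _ hinj, Cardinal.mk_toType, ho, Cardinal.card_ord]
end
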